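/- Taylor remainder bound for powers (subquadratic case): let 1 < p ≤ 2. There exists C > 0 depending only on p such that for all u ≥ 0 and v ∈ ℝ with u + v ≥ 0, | (u+v)^{p+1} − u^{p+1} − (p+1)u^p v − (p(p+1)/2) u^{p−1} v² | ≤ C |v|^{p+1}. -/

import Mathlib

/-!
Write `R(v)` for the second-order remainder and `F(x) = (u + x)^p - u^p - p u^(p-1) x` for the
first-order one, so that `R' = (p + 1) F` and `F'(x) = p ((u + x)^(p-1) - u^(p-1))`.
Since `0 < p - 1 ≤ 1`, the power `t ↦ t^(p-1)` is `(p - 1)`-Hölder on `[0, ∞)`, whence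
`|F'(x)| ≤ p |x|^(p-1)`.
Two applications of the mean value inequality on `[0, x]` then give `|F(x)| ≤ p |x|^p` and
`|R(v)| ≤ p (p + 1) |v|^(p+1)`.
-/

open Set

lemma Real.abs_rpow_sub_rpow_le {α a b : ℝ} (hα0 : 0 ≤ α) (hα1 : α ≤ 1) (ha : 0 ≤ a)
    (hb : 0 ≤ b) : |a ^ α - b ^ α| ≤ |a - b| ^ α := by
  wlog hba : b ≤ a generalizing a b
  · rw [abs_sub_comm, abs_sub_comm a]
    exact this hb ha (le_of_not_ge hba)
  have h := Real.rpow_add_le_add_rpow hb (sub_nonneg.2 hba) hα0 hα1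
  rw [add_sub_cancel] at h
  rw [abs_of_nonneg (sub_nonneg.2 hba),
    abs_of_nonneg (sub_nonneg.2 (Real.rpow_le_rpow hb hba hα0))]
  linarith

lemma abs_le_mul_abs_rpow_of_abs_deriv_le {f f' : ℝ → ℝ} {C r x : ℝ} (hC : 0 ≤ C)
    (hr : 0 ≤ r) (h0 : f 0 = 0) (hf : ∀ y ∈ uIcc 0 x, HasDerivAt f (f' y) y)
    (hf' : ∀ y ∈ uIcc 0 x, |f' y| ≤ C * |y| ^ r) : |f x| ≤ C * |x| ^ (r + 1) := by
  have hbound : ∀ y ∈ uIcc 0 x, ‖f' y‖ ≤ C * |x| ^ r := fun y hy => by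
    have hyx : |y| ≤ |x| := by simpa using abs_sub_left_of_mem_uIcc hy
    exact (hf' y hy).trans (by gcongr)
  have h := (convex_uIcc 0 x).norm_image_sub_le_of_norm_hasDerivWithin_le
    (fun y hy => (hf y hy).hasDerivWithinAt) hbound left_mem_uIcc right_mem_uIcc
  rw [h0, sub_zero, sub_zero, Real.norm_eq_abs, Real.norm_eq_abs] at h
  rwa [Real.rpow_add_one' (abs_nonneg x) (by linarith), ← mul_assoc]

lemma add_nonneg_of_mem_uIcc {u x y : ℝ} (hu : 0 ≤ u) (hux : 0 ≤ u + x)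
    (hy : y ∈ uIcc 0 x) : 0 ≤ u + y := by
  rcases mem_uIcc.1 hy with ⟨hy0, -⟩ | ⟨hxy, -⟩ <;> linarith

lemma hasDerivAt_add_rpow {p : ℝ} (hp : 1 ≤ p) (u y : ℝ) :
    HasDerivAt (fun x => (u + x) ^ p) (p * (u + y) ^ (p - 1)) y := by
  simpa using ((hasDerivAt_id y).const_add u).rpow_const (Or.inr hp)

lemma abs_rpow_sub_sub_mul_le {p u x : ℝ} (hp1 : 1 ≤ p) (hp2 : p ≤ 2) (hu : 0 ≤ u)
    (hux : 0 ≤ u + x) : |(u + x) ^ p - u ^ p - p * u ^ (p - 1) * x| ≤ p * |x| ^ p := by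
  have hderiv : ∀ y, HasDerivAt (fun x => (u + x) ^ p - u ^ p - p * u ^ (p - 1) * x)
      (p * ((u + y) ^ (p - 1) - u ^ (p - 1))) y := fun y => by
    refine (((hasDerivAt_add_rpow hp1 u y).sub_const (u ^ p)).sub
      ((hasDerivAt_id y).const_mul (p * u ^ (p - 1)))).congr_deriv ?_
    ring
  have h := abs_le_mul_abs_rpow_of_abs_deriv_le (C := p) (r := p - 1) (by linarith) (by linarith)
    (by simp) (fun y _ => hderiv y) fun y hy => by
      rw [abs_mul, abs_of_nonneg (by linarith : 0 ≤ p)]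
      gcongr
      simpa using Real.abs_rpow_sub_rpow_le (by linarith) (by linarith)
        (add_nonneg_of_mem_uIcc hu hux hy) hu
  rwa [sub_add_cancel] at h

/-- Taylor remainder bound for powers, subquadratic case `1 < p ≤ 2`. -/
theorem stmt9 (p : ℝ) (hp1 : 1 < p) (hp2 : p ≤ 2) :
    ∃ C > 0, ∀ u v : ℝ, 0 ≤ u → 0 ≤ u + v →
      |(u + v) ^ (p + 1) - u ^ (p + 1) - (p + 1) * u ^ p * v -
          (p * (p + 1) / 2) * u ^ (p - 1) * v ^ 2| ≤
        C * |v| ^ (p + 1) := by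
  refine ⟨(p + 1) * p, by positivity, fun u v hu huv => ?_⟩
  have hderiv : ∀ y, HasDerivAt (fun x => (u + x) ^ (p + 1) - u ^ (p + 1) - (p + 1) * u ^ p * x -
      (p * (p + 1) / 2) * u ^ (p - 1) * x ^ 2)
      ((p + 1) * ((u + y) ^ p - u ^ p - p * u ^ (p - 1) * y)) y := fun y => by
    refine ((((hasDerivAt_add_rpow (p := p + 1) (by linarith) u y).sub_const (u ^ (p + 1))).sub
      ((hasDerivAt_id y).const_mul ((p + 1) * u ^ p))).sub
      ((hasDerivAt_pow 2 y).const_mul (p * (p + 1) / 2 * u ^ (p - 1)))).congr_deriv ?_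
    rw [add_sub_cancel_right]
    push_cast
    ring
  refine abs_le_mul_abs_rpow_of_abs_deriv_le (by positivity) (by linarith) (by simp)
    (fun y _ => hderiv y) fun y hy => ?_
  rw [abs_mul, abs_of_nonneg (by linarith : 0 ≤ p + 1), mul_assoc (p + 1) p]
  gcongr
  exact abs_rpow_sub_sub_mul_le hp1.le hp2 hu (add_nonneg_of_mem_uIcc hu huv hy)
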